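/- Let μ, λ_min, λ_max be reals with 0 < λ_min ≤ λ_max and 0 < μ < min{2λ_max/(λ_max²+α), 2λ_min/(λ_min²+α)} for some α ≥ 0. Define γ = max{|1 - μ λ_max|, |1 - μ λ_min|}. Then γ² + μ² α < 1. -/
import Mathlib

lemma single_node_aux (μ lam α : ℝ) (hl : 0 < lam) (hα : 0 ≤ α) (hμ0 : 0 < μ)
    (hμ : μ < 2 * lam / (lam ^ 2 + α)) : |1 - μ * lam| ^ 2 + μ ^ 2 * α < 1 := by
  have hd : 0 < lam ^ 2 + α := by positivity
  have h1 : μ * (lam ^ 2 + α) < 2 * lam := by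
    rw [div_eq_mul_inv] at hμ
    calc μ * (lam ^ 2 + α) < 2 * lam / (lam ^ 2 + α) * (lam ^ 2 + α) := by
          exact mul_lt_mul_of_pos_right hμ hd
      _ = 2 * lam := by field_simp
  have := mul_lt_mul_of_pos_left h1 hμ0
  rw [sq_abs]
  nlinarith [sq_nonneg μ]

theorem single_node_contraction (μ lammin lammax α : ℝ)
    (hlmin : 0 < lammin) (hle : lammin ≤ lammax) (hα : 0 ≤ α)
    (hμ0 : 0 < μ)
    (hμ : μ < min (2 * lammax / (lammax ^ 2 + α)) (2 * lammin / (lammin ^ 2 + α))) :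
    (max |1 - μ * lammax| |1 - μ * lammin|) ^ 2 + μ ^ 2 * α < 1 := by
  rw [lt_min_iff] at hμ
  rcases max_cases |1 - μ * lammax| |1 - μ * lammin| with ⟨h, _⟩ | ⟨h, _⟩ <;> rw [h]
  · exact single_node_aux μ lammax α (lt_of_lt_of_le hlmin hle) hα hμ0 hμ.1
  · exact single_node_aux μ lammin α hlmin hα hμ0 hμ.2
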